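/- arXiv:2305.12766 — 2 statements merged into one kernel-verified Lean document; each statement's English description precedes it below -/
import Mathlib

section
/- In an HMM, let S_n be an observation prefix and x a further observation sequence. If P(s_t = s_θ | S_n, started at s_θ) ≥ ε_r for every prefix (recurrence) and every state emits the delimiter o_delim with probability at least ε_d, then the joint probability P(s_test = s_θ, S_n | start s_θ) of returning to s_θ after observing n demonstration blocks [x_i, y_i, o_delim] is at least (∏_{i=1}^n P([x_i, y_i] | s_θ)) · ε_r^{n+1} · ε_d^{n}. -/
/-- Probability of emitting the observation list `obs` when the HMM starts in
state `s` (emit from the current state, then transition). -/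
def obsProb {S O : Type*} [Fintype S]
    (T : S → S → ℝ) (B : S → O → ℝ) : S → List O → ℝ
  | _, [] => 1
  | s, o :: rest => B s o * ∑ s' : S, T s s' * obsProb T B s' rest

/-- Probability of emitting `obs` starting from `s` *and* that the hidden state
after consuming `obs` equals `send`. -/
def obsProbEnd {S O : Type*} [Fintype S] [DecidableEq S]
    (T : S → S → ℝ) (B : S → O → ℝ) : S → S → List O → ℝ
  | s, send, [] => if s = send then 1 else 0
  | s, send, o :: rest => B s o * ∑ s' : S, T s s' * obsProbEnd T B s' send rest

section aux
set_option linter.unusedSectionVars false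
variable {S O : Type*} [Fintype S] [DecidableEq S]
variable (T : S → S → ℝ) (B : S → O → ℝ)

lemma obsProb_nonneg (hT : ∀ s s', 0 ≤ T s s') (hB : ∀ s o, 0 ≤ B s o) :
    ∀ (obs : List O) (s : S), 0 ≤ obsProb T B s obs := by
  intro obs
  induction obs with
  | nil => intro s; simp [obsProb]
  | cons o rest ih =>
    intro s
    exact mul_nonneg (hB s o) (Finset.sum_nonneg fun s' _ =>
      mul_nonneg (hT s s') (ih s'))

lemma obsProbEnd_nonneg (hT : ∀ s s', 0 ≤ T s s') (hB : ∀ s o, 0 ≤ B s o) :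
    ∀ (obs : List O) (s send : S), 0 ≤ obsProbEnd T B s send obs := by
  intro obs
  induction obs with
  | nil => intro s send; simp [obsProbEnd]; positivity
  | cons o rest ih =>
    intro s send
    exact mul_nonneg (hB s o) (Finset.sum_nonneg fun s' _ =>
      mul_nonneg (hT s s') (ih s' send))

lemma obsProbEnd_append : ∀ (a b : List O) (s t : S),
    obsProbEnd T B s t (a ++ b)
      = ∑ s' : S, obsProbEnd T B s s' a * obsProbEnd T B s' t b := by
  intro a
  induction a with
  | nil =>
    intro b s t
    simp [obsProbEnd, ite_mul, Finset.sum_ite_eq]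
  | cons o rest ih =>
    intro b s t
    simp only [List.cons_append, obsProbEnd, List.append_eq, ih, Finset.mul_sum,
      Finset.sum_mul, mul_assoc]
    rw [Finset.sum_comm]

lemma obsProb_append : ∀ (a b : List O) (s : S),
    obsProb T B s (a ++ b)
      = ∑ s' : S, obsProbEnd T B s s' a * obsProb T B s' b := by
  intro a
  induction a with
  | nil =>
    intro b s
    simp [obsProbEnd, ite_mul, Finset.sum_ite_eq]
  | cons o rest ih =>
    intro b s
    simp only [List.cons_append, obsProb, obsProbEnd, List.append_eq, ih,
      Finset.mul_sum, Finset.sum_mul, mul_assoc]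
    rw [Finset.sum_comm]

end aux

/-- under the recurrence and delimiter assumptions, the joint
probability of observing the `n` demonstration blocks
`[xᵢ, yᵢ, o_delim]` and returning to the task state `s_θ` is at least
`(∏ᵢ P([xᵢ, yᵢ] | s_θ)) · ε_r^{n+1} · ε_d^n`. -/
theorem hmm_return_probability_lower_bound
    {S O : Type*} [Fintype S] [DecidableEq S] [Fintype O]
    (T : S → S → ℝ) (B : S → O → ℝ)
    (hT_nonneg : ∀ s s', 0 ≤ T s s') (hT_row : ∀ s, ∑ s', T s s' = 1)
    (hB_nonneg : ∀ s o, 0 ≤ B s o) (hB_row : ∀ s, ∑ o, B s o = 1)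
    (sθ : S) (odelim : O) (εr εd : ℝ) (hεr : 0 < εr) (hεd : 0 < εd)
    (hrecur : ∀ obs : List O,
      obsProbEnd T B sθ sθ obs ≥ εr * obsProb T B sθ obs)
    (hdelim : ∀ s, B s odelim ≥ εd)
    {n : ℕ} (x : Fin n → List O) (y : Fin n → O) :
    obsProbEnd T B sθ sθ
        (List.ofFn (fun i => x i ++ [y i] ++ [odelim])).flatten
      ≥ (∏ i, obsProb T B sθ (x i ++ [y i])) * εr ^ (n + 1) * εd ^ n := by
  have hPnn := obsProb_nonneg T B hT_nonneg hB_nonneg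
  have hEnn := obsProbEnd_nonneg T B hT_nonneg hB_nonneg
  have hεr1 : εr ≤ 1 := by
    have := hrecur []
    simp [obsProb, obsProbEnd] at this
    linarith
  -- per-block bound
  have hblock : ∀ w : List O,
      obsProbEnd T B sθ sθ (w ++ [odelim]) ≥ εr * εd * obsProb T B sθ w := by
    intro w
    have h1 := hrecur (w ++ [odelim])
    have hdel : ∀ s : S, obsProb T B s [odelim] = B s odelim := by
      intro s
      simp [obsProb, ← Finset.sum_mul, hT_row]
    have h2 : obsProb T B sθ (w ++ [odelim]) ≥ εd * obsProb T B sθ w := by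
      rw [obsProb_append]
      have hw : obsProb T B sθ w = ∑ s' : S, obsProbEnd T B sθ s' w := by
        have := obsProb_append T B w [] sθ
        simpa [obsProb] using this
      rw [hw, Finset.mul_sum]
      apply Finset.sum_le_sum
      intro s' _
      rw [hdel s', mul_comm (εd)]
      exact mul_le_mul_of_nonneg_left (hdelim s') (hEnn w sθ s')
    calc εr * εd * obsProb T B sθ w = εr * (εd * obsProb T B sθ w) := by ring
      _ ≤ εr * obsProb T B sθ (w ++ [odelim]) :=
          mul_le_mul_of_nonneg_left h2 hεr.le
      _ ≤ obsProbEnd T B sθ sθ (w ++ [odelim]) := h1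
  induction n with
  | zero =>
    simpa [obsProbEnd] using hεr1
  | succ m ih =>
    rw [List.ofFn_succ, List.flatten_cons, obsProbEnd_append]
    have hsingle :
        obsProbEnd T B sθ sθ (x 0 ++ [y 0] ++ [odelim]) *
          obsProbEnd T B sθ sθ
            (List.ofFn (fun i : Fin m =>
              x i.succ ++ [y i.succ] ++ [odelim])).flatten
        ≤ ∑ s' : S,
            obsProbEnd T B sθ s' (x 0 ++ [y 0] ++ [odelim]) *
            obsProbEnd T B s' sθ
              (List.ofFn (fun i : Fin m =>
                x i.succ ++ [y i.succ] ++ [odelim])).flatten := by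
      exact Finset.single_le_sum
        (f := fun s' : S =>
          obsProbEnd T B sθ s' (x 0 ++ [y 0] ++ [odelim]) *
          obsProbEnd T B s' sθ
            (List.ofFn (fun i : Fin m =>
              x i.succ ++ [y i.succ] ++ [odelim])).flatten)
        (fun s' _ => mul_nonneg (hEnn _ _ _) (hEnn _ _ _))
        (Finset.mem_univ sθ)
    have h1 := hblock (x 0 ++ [y 0])
    have h2 := ih (fun i => x i.succ) (fun i => y i.succ)
    have hrhs0 : (0:ℝ) ≤ (∏ i : Fin m, obsProb T B sθ (x i.succ ++ [y i.succ]))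
        * εr ^ (m + 1) * εd ^ m := by
      apply mul_nonneg (mul_nonneg (Finset.prod_nonneg fun i _ => hPnn _ _) _) _
      · positivity
      · positivity
    have hcomb :
        (εr * εd * obsProb T B sθ (x 0 ++ [y 0])) *
          ((∏ i : Fin m, obsProb T B sθ (x i.succ ++ [y i.succ]))
            * εr ^ (m + 1) * εd ^ m)
        ≤ obsProbEnd T B sθ sθ (x 0 ++ [y 0] ++ [odelim]) *
          obsProbEnd T B sθ sθ
            (List.ofFn (fun i : Fin m =>
              x i.succ ++ [y i.succ] ++ [odelim])).flatten := by
      apply mul_le_mul h1 h2 hrhs0 (hEnn _ _ _)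
    refine le_trans ?_ (le_trans hcomb hsingle)
    rw [Fin.prod_univ_succ]
    ring_nf
    exact le_of_eq (by ring)
end

section
/- Let y* maximize p ∈ ℝ^m with margin Δ (p(y*) − p(y) ≥ Δ for y ≠ y*). Suppose ŷ ∈ ℝ^m satisfies ‖ŷ − p‖_∞ ≤ e₁ + e₂ where e₁ = √(ln(4m/δ)/(2n)) and e₂ = εη² with ε η² < Δ/2. If n > ln(4m/δ) / (2 (Δ/2 − εη²)²), then argmax ŷ = y*. -/
/-- combining statistical error, covariance-mismatch error and the
margin condition preserves the argmax. -/
theorem argmax_preserved_of_sample_size {m n : ℕ} (hm : 1 ≤ m)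
    (p yhat : Fin m → ℝ) (ystar : Fin m) (Δ δ ε η : ℝ)
    (hΔ : 0 < Δ) (hδ : 0 < δ) (hδ1 : δ < 1)
    (hmargin : ∀ y, y ≠ ystar → p ystar - p y ≥ Δ)
    (hmis : ε * η ^ 2 < Δ / 2)
    (hn : (n : ℝ) > Real.log (4 * m / δ) / (2 * (Δ / 2 - ε * η ^ 2) ^ 2))
    (hdev : ∀ y, |yhat y - p y| ≤
      Real.sqrt (Real.log (4 * m / δ) / (2 * n)) + ε * η ^ 2) :
    ∀ y, y ≠ ystar → yhat y < yhat ystar := by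
  set c : ℝ := Δ / 2 - ε * η ^ 2 with hc
  have hcpos : 0 < c := by simp [hc]; linarith
  set L : ℝ := Real.log (4 * m / δ) with hL
  have hLpos : 0 < L := by
    apply Real.log_pos
    have hm1 : (1 : ℝ) ≤ (m : ℝ) := by exact_mod_cast hm
    rw [lt_div_iff₀ hδ]
    nlinarith
  have hnpos : (0 : ℝ) < n := by
    have : 0 < L / (2 * c ^ 2) := by positivity
    linarith
  have hsq : L / (2 * n) < c ^ 2 := by
    rw [div_lt_iff₀ (by positivity)]
    rw [gt_iff_lt, div_lt_iff₀ (by positivity)] at hn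
    nlinarith
  have he1 : Real.sqrt (L / (2 * n)) < c := by
    have := Real.sqrt_lt_sqrt (by positivity) hsq
    rwa [Real.sqrt_sq hcpos.le] at this
  have hsum : Real.sqrt (L / (2 * n)) + ε * η ^ 2 < Δ / 2 := by
    simp only [hc] at he1; linarith
  intro y hy
  have h1 := abs_le.mp (hdev y)
  have h2 := abs_le.mp (hdev ystar)
  have h3 := hmargin y hy
  linarith [h1.1, h1.2, h2.1, h2.2]
end
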